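/- arXiv:2507.08994 — 3 statements merged into one kernel-verified Lean document; each statement's English description precedes it below -/
import Mathlib

section
/- Let Δ₁, …, Δ_N > 0 and consider probability vectors α over indices {1,…,2N} (pairs (a_j, b_j) for j=1,…,N). The supremum over such α of min_{j∈[N]} (Δ_j²/2)·(α_{a_j} α_{b_j}/(α_{a_j}+α_{b_j})) equals 1/(8·Σ_{j=1}^N 1/Δ_j²), attained when α_{a_j} = α_{b_j} = (1/Δ_j²)/(2Σ_{i=1}^N 1/Δ_i²). -/
/-!
Every pair obeys the harmonic–arithmetic mean bound `a b / (a + b) ≤ (a + b) / 4`, so a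
common lower bound `m` on the pair objectives forces `a_j + b_j ≥ 8 m / Δ_j²`; summing over `j`
and using `Σ (a_j + b_j) = 1` gives `m ≤ 1 / (8 Σ 1/Δ_j²)`. Splitting each pair equally with
weights proportional to `1/Δ_j²` makes every pair objective equal to this bound.
-/

open Finset

theorem mul_div_add_le_add_div_four {a b : ℝ} (ha : 0 ≤ a) (hb : 0 ≤ b) :
    a * b / (a + b) ≤ (a + b) / 4 := by
  rcases (add_nonneg ha hb).eq_or_lt with h | h
  · rw [← h, div_zero, zero_div]
  · rw [div_le_div_iff₀ h four_pos]
    nlinarith [sq_nonneg (a - b)]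

theorem mul_self_div_add_self {K : Type*} [Field K] (x : K) : x * x / (x + x) = x / 2 := by
  rcases eq_or_ne x 0 with rfl | hx
  · simp
  rw [← two_mul, mul_div_mul_right _ _ hx]

theorem mul_eight_div_sq_le_add {Δ a b m : ℝ} (hΔ : Δ ≠ 0) (ha : 0 ≤ a) (hb : 0 ≤ b)
    (hm : m ≤ Δ ^ 2 / 2 * (a * b / (a + b))) : m * (8 / Δ ^ 2) ≤ a + b := by
  have hΔ2 : 0 < Δ ^ 2 := by positivity
  calc m * (8 / Δ ^ 2) ≤ Δ ^ 2 / 2 * ((a + b) / 4) * (8 / Δ ^ 2) := by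
        gcongr
        exact hm.trans <|
          mul_le_mul_of_nonneg_left (mul_div_add_le_add_div_four ha hb) (by positivity)
    _ = a + b := by field_simp; ring

theorem mul_eight_mul_sum_inv_sq_le {ι : Type*} [Fintype ι] {Δ α β : ι → ℝ} {m : ℝ}
    (hΔ : ∀ j, Δ j ≠ 0) (hα : ∀ j, 0 ≤ α j) (hβ : ∀ j, 0 ≤ β j)
    (hm : ∀ j, m ≤ Δ j ^ 2 / 2 * (α j * β j / (α j + β j))) :
    m * (8 * ∑ j, 1 / Δ j ^ 2) ≤ ∑ j, (α j + β j) := by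
  calc m * (8 * ∑ j, 1 / Δ j ^ 2) = ∑ j, m * (8 / Δ j ^ 2) := by
        simp only [mul_sum, mul_one_div]
    _ ≤ ∑ j, (α j + β j) :=
        sum_le_sum fun j _ => mul_eight_div_sq_le_add (hΔ j) (hα j) (hβ j) (hm j)

theorem sum_one_div_sq_pos {ι : Type*} [Fintype ι] [Nonempty ι] {Δ : ι → ℝ}
    (hΔ : ∀ j, Δ j ≠ 0) : 0 < ∑ j, 1 / Δ j ^ 2 :=
  sum_pos (fun j _ => by have := hΔ j; positivity) univ_nonempty

noncomputable def inverseSquareWeight {ι : Type*} [Fintype ι] (Δ : ι → ℝ) (j : ι) : ℝ :=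
  1 / Δ j ^ 2 / (2 * ∑ i, 1 / Δ i ^ 2)

section inverseSquareWeight

variable {ι : Type*} [Fintype ι] {Δ : ι → ℝ}

theorem inverseSquareWeight_nonneg (j : ι) : 0 ≤ inverseSquareWeight Δ j := by
  unfold inverseSquareWeight
  positivity

theorem sum_inverseSquareWeight_add_self (hS : ∑ i, 1 / Δ i ^ 2 ≠ 0) :
    ∑ j, (inverseSquareWeight Δ j + inverseSquareWeight Δ j) = 1 := by
  simp only [inverseSquareWeight, sum_add_distrib, ← sum_div]
  field_simp
  norm_num

theorem objective_inverseSquareWeight (hS : ∑ i, 1 / Δ i ^ 2 ≠ 0) {j : ι} (hΔ : Δ j ≠ 0) :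
    Δ j ^ 2 / 2 * (inverseSquareWeight Δ j * inverseSquareWeight Δ j /
      (inverseSquareWeight Δ j + inverseSquareWeight Δ j)) = 1 / (8 * ∑ i, 1 / Δ i ^ 2) := by
  rw [mul_self_div_add_self, inverseSquareWeight]
  field_simp
  ring

end inverseSquareWeight

/-- Optimal allocation for multiple change points: for gaps `Δ_j > 0`, the greatest value
over probability vectors split into pairs `(a_j, b_j)` (weights `α j`, `β j` with total sum 1)
of `min_j (Δ_j²/2) · α_j β_j / (α_j + β_j)` is `1 / (8 Σ_j 1/Δ_j²)`, attained at
`α_j = β_j = (1/Δ_j²) / (2 Σ_i 1/Δ_i²)`. -/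
theorem multiple_change_point_optimal_proportions (N : ℕ) (hN : 0 < N)
    (Δ : Fin N → ℝ) (hΔ : ∀ j, 0 < Δ j) :
    IsGreatest
      {z : ℝ | ∃ α β : Fin N → ℝ, (∀ j, 0 ≤ α j) ∧ (∀ j, 0 ≤ β j) ∧
          (∑ j, (α j + β j)) = 1 ∧
          z = (univ.inf' (⟨⟨0, hN⟩, Finset.mem_univ _⟩) fun j =>
            Δ j ^ 2 / 2 * (α j * β j / (α j + β j)))}
      (1 / (8 * ∑ j, 1 / Δ j ^ 2)) ∧
    (univ.inf' (⟨⟨0, hN⟩, Finset.mem_univ _⟩) fun j =>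
        Δ j ^ 2 / 2 *
          (((1 / Δ j ^ 2) / (2 * ∑ i, 1 / Δ i ^ 2)) * ((1 / Δ j ^ 2) / (2 * ∑ i, 1 / Δ i ^ 2)) /
            (((1 / Δ j ^ 2) / (2 * ∑ i, 1 / Δ i ^ 2)) + ((1 / Δ j ^ 2) / (2 * ∑ i, 1 / Δ i ^ 2)))))
      = 1 / (8 * ∑ j, 1 / Δ j ^ 2) := by
  have hΔ₀ : ∀ j, Δ j ≠ 0 := fun j => (hΔ j).ne'
  have : Nonempty (Fin N) := ⟨⟨0, hN⟩⟩
  have hS := sum_one_div_sq_pos hΔ₀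
  have hopt : (univ.inf' ⟨⟨0, hN⟩, mem_univ _⟩ fun j => Δ j ^ 2 / 2 *
      (inverseSquareWeight Δ j * inverseSquareWeight Δ j /
        (inverseSquareWeight Δ j + inverseSquareWeight Δ j))) = 1 / (8 * ∑ j, 1 / Δ j ^ 2) := by
    simp only [objective_inverseSquareWeight hS.ne' (hΔ₀ _)]
    exact inf'_const _ _
  refine ⟨⟨⟨inverseSquareWeight Δ, inverseSquareWeight Δ, inverseSquareWeight_nonneg,
    inverseSquareWeight_nonneg, sum_inverseSquareWeight_add_self hS.ne', hopt.symm⟩, ?_⟩, hopt⟩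
  rintro z ⟨α, β, hα, hβ, hsum, rfl⟩
  rw [le_div_iff₀ (by positivity)]
  exact (mul_eight_mul_sum_inv_sq_le hΔ₀ hα hβ fun j => inf'_le _ (mem_univ j)).trans_eq hsum
end

section
/- Let Δ₁, …, Δ_N > 0 and consider probability vectors α over indices {1,…,2N}. The supremum over such α of min_{j∈[N]} (Δ_j²/2)·min(α_{a_j}, α_{b_j}) equals 1/(4·Σ_{j=1}^N 1/Δ_j²). -/
open Finset

/-!
Since `min (α j) (β j) ≤ (α j + β j) / 2`, every feasible allocation has
`m ≤ (Δ j ^ 2 / 4) (α j + β j)` for its minimum `m`; dividing by `Δ j ^ 2 / 4` and summing over `j`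
gives `4 m ∑ 1 / Δ j ^ 2 ≤ 1`. Equality is reached by the equalizing allocation
`α j = β j ∝ 1 / Δ j ^ 2`, for which every term of the minimum equals `1 / (4 ∑ 1 / Δ j ^ 2)`.
-/

namespace Finset

variable {ι K : Type*} [Field K] [LinearOrder K] [IsStrictOrderedRing K]

theorem inf'_mul_sum_inv_le_sum {s : Finset ι} (hs : s.Nonempty) {c x : ι → K}
    (hc : ∀ j ∈ s, 0 < c j) :
    s.inf' hs (fun j => c j * x j) * ∑ j ∈ s, (c j)⁻¹ ≤ ∑ j ∈ s, x j := by
  rw [mul_sum]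
  refine sum_le_sum fun j hj => ?_
  calc s.inf' hs (fun j => c j * x j) * (c j)⁻¹ ≤ c j * x j * (c j)⁻¹ :=
        mul_le_mul_of_nonneg_right (inf'_le _ hj) (inv_pos.2 (hc j hj)).le
    _ = x j := by field_simp [(hc j hj).ne']

theorem sum_min_le_half_sum_add (s : Finset ι) (α β : ι → K) :
    ∑ j ∈ s, min (α j) (β j) ≤ (∑ j ∈ s, (α j + β j)) / 2 := by
  rw [sum_div]
  exact sum_le_sum fun j _ => by
    linarith [min_le_left (α j) (β j), min_le_right (α j) (β j)]

end Finset

/-- Exact-(N,δ) allocation: for gaps `Δ_j > 0`, the supremum over probability vectors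
split into pairs `(a_j, b_j)` (weights `α j`, `β j` with total sum 1) of
`min_j (Δ_j²/2) · min(α_j, β_j)` equals `1 / (4 Σ_j 1/Δ_j²)`. -/
theorem exact_N_optimal_proportions (N : ℕ) (hN : 0 < N)
    (Δ : Fin N → ℝ) (hΔ : ∀ j, 0 < Δ j) :
    IsLUB
      {z : ℝ | ∃ α β : Fin N → ℝ, (∀ j, 0 ≤ α j) ∧ (∀ j, 0 ≤ β j) ∧
          (∑ j, (α j + β j)) = 1 ∧
          z = (univ.inf' ⟨⟨0, hN⟩, Finset.mem_univ _⟩ fun j =>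
            Δ j ^ 2 / 2 * min (α j) (β j))}
      (1 / (4 * ∑ j, 1 / Δ j ^ 2)) := by
  set S : ℝ := ∑ j, 1 / Δ j ^ 2 with hS_def
  have hΔ2 : ∀ j, 0 < Δ j ^ 2 := fun j => pow_pos (hΔ j) 2
  have hS : 0 < S := sum_pos (fun j _ => one_div_pos.2 (hΔ2 j)) ⟨⟨0, hN⟩, mem_univ _⟩
  refine IsGreatest.isLUB ⟨?_, ?_⟩
  · set p : Fin N → ℝ := fun j => 1 / Δ j ^ 2 / (2 * S)
    have hp : ∀ j, 0 ≤ p j := fun j => by have := hΔ2 j; positivity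
    have hp_sum : ∑ j, (p j + p j) = 1 := by
      simp only [p, ← two_mul, ← mul_sum, ← sum_div, ← hS_def]
      field_simp
    have hp_eq : ∀ j, Δ j ^ 2 / 2 * min (p j) (p j) = 1 / (4 * S) := fun j => by
      simp only [p, min_self]
      field_simp [(hΔ j).ne']
      ring
    exact ⟨p, p, hp, hp, hp_sum, (inf'_eq_of_forall _ _ fun j _ => hp_eq j).symm⟩
  · rintro z ⟨α, β, -, -, hsum, rfl⟩
    have h_inf := inf'_mul_sum_inv_le_sum (x := fun j => min (α j) (β j))
      ⟨⟨0, hN⟩, mem_univ _⟩ fun j _ => half_pos (hΔ2 j)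
    have h_sum := sum_min_le_half_sum_add univ α β
    have h_inv : ∑ j, (Δ j ^ 2 / 2)⁻¹ = 2 * S := by
      simp only [hS_def, mul_sum, inv_div, one_div]
      exact sum_congr rfl fun j _ => by field_simp
    rw [h_inv] at h_inf
    rw [hsum] at h_sum
    rw [le_div_iff₀ (by positivity)]
    linarith
end

section
/- Let x*, x' ∈ [K−1] with x' > x*, let μ have a single change point at x* with values μ_L (for i ≤ x*) and μ_R (for i > x*), Δ = |μ_L − μ_R| > 0, and let α be a probability vector on [K]. Among all environments μ' with a single change point at x' (values μ'_L for i ≤ x', μ'_R for i > x'), the infimum of (1/(2σ²))·Σ_{i=1}^K α_i (μ_i − μ'_i)² equals (Δ²/(2σ²))·(A·B/(A+B)), where A = Σ_{i=1}^{x*} α_i and B = Σ_{i=x*+1}^{x'} α_i (value 0 if A+B = 0). -/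
open Finset

/-!
Splitting `[K]` at `x* < x'` into the blocks before `x*`, between `x*` and `x'`, and after `x'`,
the objective is `A (μL - μL')² + B (μR - μL')² + C (μR - μR')²` with block weights `A, B, C`.
The last term vanishes at `μR' = μR`, and the first two are minimised by the weighted mean
`μL' = (A μL + B μR) / (A + B)`, where they equal `A B / (A + B) · (μL - μR)²`.
-/

theorem isLeast_range_mul_sq_sub_add_mul_sq_sub {A B : ℝ} (hA : 0 ≤ A) (hB : 0 ≤ B) (p q : ℝ) :
    IsLeast (Set.range fun a => A * (p - a) ^ 2 + B * (q - a) ^ 2)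
      (A * B / (A + B) * (p - q) ^ 2) := by
  rcases (add_nonneg hA hB).eq_or_lt with hAB | hAB
  · obtain ⟨rfl, rfl⟩ : A = 0 ∧ B = 0 := ⟨by linarith, by linarith⟩
    simp
  refine ⟨⟨(A * p + B * q) / (A + B), by field_simp; ring⟩, ?_⟩
  rintro _ ⟨a, rfl⟩
  rw [div_mul_eq_mul_div, div_le_iff₀ hAB]
  -- `(A + B) (A x² + B y²) - A B (x - y)² = (A x + B y)²` with `x = p - a`, `y = q - a`
  nlinarith [sq_nonneg (A * (p - a) + B * (q - a))]

theorem sum_mul_sq_sub_ite_ite {K s t : ℕ} (hst : s ≤ t) (α : Fin K → ℝ) (μL μR a b : ℝ) :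
    ∑ i : Fin K, α i * ((if (i : ℕ) < s then μL else μR) - (if (i : ℕ) < t then a else b)) ^ 2 =
      (∑ i ∈ univ.filter fun i : Fin K => (i : ℕ) < s, α i) * (μL - a) ^ 2 +
      (∑ i ∈ univ.filter fun i : Fin K => s ≤ (i : ℕ) ∧ (i : ℕ) < t, α i) * (μR - a) ^ 2 +
      (∑ i ∈ univ.filter fun i : Fin K => t ≤ (i : ℕ), α i) * (μR - b) ^ 2 := by
  simp only [sum_filter, sum_mul, ← sum_add_distrib]
  refine sum_congr rfl fun i _ => ?_
  split_ifs <;> first | (exfalso; omega) | ring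

theorem closest_alternative_shifted_change_point_general (K : ℕ) (xstar x' : ℕ)
    (hxx : xstar < x')
    (μL μR σ : ℝ)
    (α : Fin K → ℝ) (hα : ∀ i, 0 ≤ α i) :
    IsGLB
      {z : ℝ | ∃ μL' μR' : ℝ, z = 1 / (2 * σ ^ 2) *
        ∑ i : Fin K, α i *
          ((if (i : ℕ) < xstar then μL else μR) -
            (if (i : ℕ) < x' then μL' else μR')) ^ 2}
      ((μL - μR) ^ 2 / (2 * σ ^ 2) *
        ((∑ i ∈ univ.filter fun i : Fin K => (i : ℕ) < xstar, α i) *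
          (∑ i ∈ univ.filter fun i : Fin K => xstar ≤ (i : ℕ) ∧ (i : ℕ) < x', α i) /
          ((∑ i ∈ univ.filter fun i : Fin K => (i : ℕ) < xstar, α i) +
            (∑ i ∈ univ.filter fun i : Fin K => xstar ≤ (i : ℕ) ∧ (i : ℕ) < x', α i)))) := by
  simp only [sum_mul_sq_sub_ite_ite hxx.le]
  set A := ∑ i ∈ univ.filter fun i : Fin K => (i : ℕ) < xstar, α i
  set B := ∑ i ∈ univ.filter fun i : Fin K => xstar ≤ (i : ℕ) ∧ (i : ℕ) < x', α i
  set C := ∑ i ∈ univ.filter fun i : Fin K => x' ≤ (i : ℕ), α i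
  obtain ⟨⟨a₀, ha₀⟩, hlower⟩ := isLeast_range_mul_sq_sub_add_mul_sq_sub
    (sum_nonneg fun i _ => hα i : 0 ≤ A) (sum_nonneg fun i _ => hα i : 0 ≤ B) μL μR
  refine IsLeast.isGLB ⟨⟨a₀, μR, ?_⟩, ?_⟩
  · simp only at ha₀
    rw [ha₀]
    ring
  · rintro _ ⟨a, b, rfl⟩
    have hpair := hlower ⟨a, rfl⟩
    calc (μL - μR) ^ 2 / (2 * σ ^ 2) * (A * B / (A + B))
        = 1 / (2 * σ ^ 2) * (A * B / (A + B) * (μL - μR) ^ 2) := by ring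
      _ ≤ _ := by
        gcongr
        linarith [mul_nonneg (sum_nonneg fun i _ => hα i : 0 ≤ C) (sq_nonneg (μR - b))]

/-- Closest alternative environment with a shifted change point: let `μ` have a single
change point at `x*` (values `μL` for indices `≤ x*`, `μR` after), `Δ = |μL − μR| > 0`,
and let `α` be a probability vector on `[K]`. Over all single-change-point environments
`μ'` with change point at `x' > x*` (values `μL'` then `μR'`), the infimum of
`(1/(2σ²)) Σᵢ αᵢ (μᵢ − μ'ᵢ)²` equals `(Δ²/(2σ²)) · AB/(A+B)`, where
`A = Σ_{i ≤ x*} αᵢ` and `B = Σ_{x* < i ≤ x'} αᵢ` (the value being `0` if `A + B = 0`). -/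
theorem closest_alternative_shifted_change_point (K : ℕ) (xstar x' : ℕ)
    (hx1 : 1 ≤ xstar) (hxx : xstar < x') (hx'K : x' ≤ K - 1)
    (μL μR σ : ℝ) (hσ : 0 < σ) (hΔ : μL ≠ μR)
    (α : Fin K → ℝ) (hα : ∀ i, 0 ≤ α i) (hαsum : ∑ i, α i = 1) :
    IsGLB
      {z : ℝ | ∃ μL' μR' : ℝ, z = 1 / (2 * σ ^ 2) *
        ∑ i : Fin K, α i *
          ((if (i : ℕ) < xstar then μL else μR) -
            (if (i : ℕ) < x' then μL' else μR')) ^ 2}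
      ((μL - μR) ^ 2 / (2 * σ ^ 2) *
        ((∑ i ∈ univ.filter fun i : Fin K => (i : ℕ) < xstar, α i) *
          (∑ i ∈ univ.filter fun i : Fin K => xstar ≤ (i : ℕ) ∧ (i : ℕ) < x', α i) /
          ((∑ i ∈ univ.filter fun i : Fin K => (i : ℕ) < xstar, α i) +
            (∑ i ∈ univ.filter fun i : Fin K => xstar ≤ (i : ℕ) ∧ (i : ℕ) < x', α i)))) :=
  closest_alternative_shifted_change_point_general K xstar x' hxx μL μR σ α hα
end
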